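/- The basic labeled stack machine with the buggy Store rule that ignores the pointer label (Store*ab: stores n@ℓn through pointer p@ℓp without any check or taint) violates end-to-end noninterference: there exist two indistinguishable initial states that both execute to halted states whose memories are distinguishable. -/
import Mathlib


/-- The two-point label lattice: `L` (low/public) and `H` (high/secret). -/
inductive Lab where
  | L
  | H
deriving DecidableEq

/-- `L ⊑ H`; the flows-to ordering. -/
def Lab.flows : Lab → Lab → Prop
  | .H, .L => False
  | _, _ => True

/-- Join (least upper bound) of two labels. -/
def Lab.join : Lab → Lab → Lab
  | .L, .L => .L
  | _, _ => .H

/-- A labeled integer `n@ℓ`. -/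
structure LInt where
  val : Int
  lab : Lab
deriving DecidableEq

/-- Instructions of the basic labeled stack machine. -/
inductive Instr where
  | Push (v : LInt)
  | Pop
  | Load
  | Store
  | Add
  | Noop
  | Halt
deriving DecidableEq

/-- Lookup a list at an integer index. -/
def getI {α : Type} (xs : List α) (i : Int) : Option α :=
  if 0 ≤ i then xs[i.toNat]? else none

/-- Update a list at an integer index. -/
def setI {α : Type} (xs : List α) (i : Int) (a : α) : List α :=
  if 0 ≤ i then xs.set i.toNat a else xs

/-- A machine state: program counter, stack, data memory, instruction memory. -/
structure St where
  pc : Int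
  stk : List LInt
  mem : List LInt
  imem : List Instr

/-- The step relation of the basic machine with the buggy Store*ab rule (no check, no pointer taint). -/
inductive Step : St → St → Prop where
  | noop {pc s m i} :
      getI i pc = some .Noop →
      Step ⟨pc, s, m, i⟩ ⟨pc + 1, s, m, i⟩
  | push {pc s m i v} :
      getI i pc = some (.Push v) →
      Step ⟨pc, s, m, i⟩ ⟨pc + 1, v :: s, m, i⟩
  | pop {pc v s m i} :
      getI i pc = some .Pop →
      Step ⟨pc, v :: s, m, i⟩ ⟨pc + 1, s, m, i⟩
  | load {pc p ℓp s m i n ℓn} :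
      getI i pc = some .Load →
      getI m p = some ⟨n, ℓn⟩ →
      Step ⟨pc, ⟨p, ℓp⟩ :: s, m, i⟩ ⟨pc + 1, ⟨n, ℓn.join ℓp⟩ :: s, m, i⟩
  | store {pc p ℓp n ℓn s m i} :
      getI i pc = some .Store →
      Step ⟨pc, ⟨p, ℓp⟩ :: ⟨n, ℓn⟩ :: s, m, i⟩
           ⟨pc + 1, s, setI m p ⟨n, ℓn⟩, i⟩
  | add {pc n1 ℓ1 n2 ℓ2 s m i} :
      getI i pc = some .Add →
      Step ⟨pc, ⟨n1, ℓ1⟩ :: ⟨n2, ℓ2⟩ :: s, m, i⟩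
           ⟨pc + 1, ⟨n1 + n2, ℓ1.join ℓ2⟩ :: s, m, i⟩

/-- Indistinguishability of labeled integers: both labels `H`, or both labels
`L` with equal payloads. -/
def LInt.indist (a b : LInt) : Prop :=
  (a.lab = Lab.H ∧ b.lab = Lab.H) ∨ (a.val = b.val ∧ a.lab = Lab.L ∧ b.lab = Lab.L)

/-- Indistinguishability of instructions: equal, or both `Push` with
indistinguishable labeled-integer arguments. -/
def Instr.indist : Instr → Instr → Prop
  | .Push a, .Push b => LInt.indist a b
  | i1, i2 => i1 = i2

/-- Pointwise lifting of a relation to lists: equal lengths and elementwise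
relatedness. -/
def ListIndist {α : Type} (R : α → α → Prop) (xs ys : List α) : Prop :=
  xs.length = ys.length ∧
  ∀ j (h1 : j < xs.length) (h2 : j < ys.length),
    R (xs.get ⟨j, h1⟩) (ys.get ⟨j, h2⟩)

/-- Indistinguishability of states with respect to memories: the data memories
and instruction memories are pointwise indistinguishable. -/
def IndistMem (S1 S2 : St) : Prop :=
  ListIndist LInt.indist S1.mem S2.mem ∧ ListIndist Instr.indist S1.imem S2.imem

/-- Initial states: `pc = 0`, empty stack, and memory containing only `0@L`. -/
def Initial (S : St) : Prop :=
  S.pc = 0 ∧ S.stk = [] ∧ ∀ v ∈ S.mem, v = (⟨0, Lab.L⟩ : LInt)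

/-- A halted state: the current instruction is `Halt`. -/
def Halted (S : St) : Prop := getI S.imem S.pc = some .Halt

/-- Multi-step execution. -/
def Exec : St → St → Prop := Relation.ReflTransGen Step

/-- A stuck state: no step is possible. -/
def Stuck (S : St) : Prop := ∀ S', ¬ Step S S'

def prog (v : Int) : List Instr :=
  [.Push ⟨1, .L⟩, .Push ⟨v, .H⟩, .Store, .Halt]

def stS (v : Int) : St := ⟨0, [], [⟨0, .L⟩, ⟨0, .L⟩], prog v⟩

lemma exec_run (v : Int) :
    Exec (stS v) ⟨3, [], setI [⟨0, .L⟩, ⟨0, .L⟩] v ⟨1, .L⟩, prog v⟩ := by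
  have h0 : Step (stS v) ⟨0 + 1, ⟨1, .L⟩ :: [], [⟨0, .L⟩, ⟨0, .L⟩], prog v⟩ :=
    Step.push (by rfl)
  have h1 : Step ⟨(1 : Int), ⟨1, .L⟩ :: [], [⟨0, .L⟩, ⟨0, .L⟩], prog v⟩
      ⟨1 + 1, ⟨v, .H⟩ :: ⟨1, .L⟩ :: [], [⟨0, .L⟩, ⟨0, .L⟩], prog v⟩ :=
    Step.push (by rfl)
  have h2 : Step ⟨(2 : Int), ⟨v, .H⟩ :: ⟨1, .L⟩ :: [], [⟨0, .L⟩, ⟨0, .L⟩], prog v⟩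
      ⟨2 + 1, [], setI [⟨0, .L⟩, ⟨0, .L⟩] v ⟨1, .L⟩, prog v⟩ :=
    Step.store (by rfl)
  exact Relation.ReflTransGen.tail
    (Relation.ReflTransGen.tail (Relation.ReflTransGen.single h0) h1) h2

/-- The buggy machine violates end-to-end noninterference: there exist two
indistinguishable initial states that both execute to stuck halted states
whose final states are memory-distinguishable. -/
theorem eeni_violation :
    ∃ S1 S2 S1' S2' : St,
      Initial S1 ∧ Initial S2 ∧ IndistMem S1 S2 ∧
      Exec S1 S1' ∧ Stuck S1' ∧ Halted S1' ∧
      Exec S2 S2' ∧ Stuck S2' ∧ Halted S2' ∧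
      ¬ IndistMem S1' S2' := by
  refine ⟨stS 0, stS 1,
    ⟨3, [], setI [⟨0, .L⟩, ⟨0, .L⟩] 0 ⟨1, .L⟩, prog 0⟩,
    ⟨3, [], setI [⟨0, .L⟩, ⟨0, .L⟩] 1 ⟨1, .L⟩, prog 1⟩, ?_, ?_, ?_, ?_, ?_, ?_, ?_, ?_, ?_, ?_⟩
  · exact ⟨rfl, rfl, by intro v hv; simp [stS] at hv; exact hv⟩
  · exact ⟨rfl, rfl, by intro v hv; simp [stS] at hv; exact hv⟩
  · refine ⟨⟨rfl, ?_⟩, ⟨rfl, ?_⟩⟩ <;> intro j h1 h2 <;>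
      simp only [stS, prog, List.length] at h1 <;>
      interval_cases j <;> simp [stS, prog, LInt.indist, Instr.indist] <;> try rfl
  · have := exec_run 0; exact this
  · intro S' h
    cases h <;> simp_all [getI, prog, setI]
  · rfl
  · have := exec_run 1; exact this
  · intro S' h
    cases h <;> simp_all [getI, prog, setI]
  · rfl
  · intro ⟨⟨hl, hj⟩, _⟩
    have := hj 0 (by simp [setI]) (by simp [setI])
    simp [setI, LInt.indist] at this
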